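/- Let I ⊆ ℂ[z₁,…,z_d] and J ⊆ ℂ[z₁,…,z_{d'}] be homogeneous ideals, and set Z(I) = V(I) ∩ closed unit ball of ℂ^d and Z(J) = V(J) ∩ closed unit ball of ℂ^{d'}. Let F : ℂ^{d'} → ℂ^d be continuous on the closed unit ball, ℂ-differentiable (holomorphic) on the open unit ball, with F(0) = 0 and F(Z(J)) ⊆ Z(I); let G : ℂ^d → ℂ^{d'} be continuous on the closed unit ball, holomorphic on the open unit ball, with G(Z(I)) ⊆ Z(J). If F(G(z)) = z for all z ∈ Z(I) and G(F(z)) = z for all z ∈ Z(J), then there exists a ℂ-linear map A : ℂ^{d'} → ℂ^d such that F(z) = A z for all z ∈ Z(J). -/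

import Mathlib

open MvPolynomial Metric

noncomputable section

/-- `Cd d` is ℂ^d with the Euclidean (Hermitian) norm. -/
abbrev Cd (d : ℕ) := EuclideanSpace ℂ (Fin d)

/-- The zero locus `V(I)` of an ideal of polynomials. -/
def VI {d : ℕ} (I : Ideal (MvPolynomial (Fin d) ℂ)) : Set (Cd d) :=
  {z | ∀ p ∈ I, eval (fun i => z i) p = 0}

/-- `Z(I) = V(I) ∩ closed unit ball`. -/
def ZI {d : ℕ} (I : Ideal (MvPolynomial (Fin d) ℂ)) : Set (Cd d) :=
  VI I ∩ Metric.closedBall 0 1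

/-- An ideal is homogeneous if it contains the homogeneous components of each of
its elements. -/
def IsHomogeneousIdeal {d : ℕ} (I : Ideal (MvPolynomial (Fin d) ℂ)) : Prop :=
  ∀ p ∈ I, ∀ n : ℕ, homogeneousComponent n p ∈ I

/-! Homogeneity makes `V(I)` and `V(J)` complex cones, so `F` and `G` restrict to holomorphic maps
from discs `{c • z}` into the closed unit ball, and the Schwarz lemma along these lines gives
`‖F z‖ ≤ ‖z‖` and `‖G w‖ ≤ ‖w‖` on the open ball. As `G ∘ F = id` on `Z(J)`, `F` preserves norms
there, and the equality case of the Schwarz lemma forces `F (c • z) = c • F z`, so `F` agrees with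
its derivative at `0`. Continuity carries this to the closed ball. -/

open Set

theorem MvPolynomial.IsHomogeneous.eval_smul {σ R : Type*} [Fintype σ] [CommSemiring R]
    {p : MvPolynomial σ R} {n : ℕ} (hp : p.IsHomogeneous n) (c : R) (x : σ → R) :
    eval (c • x) p = c ^ n * eval x p := by
  rw [eval_eq', eval_eq', Finset.mul_sum]
  refine Finset.sum_congr rfl fun e he => ?_
  have hdeg : ∑ i, e i = n := by
    rw [← Finsupp.degree_eq_sum, Finsupp.degree_eq_weight_one]
    exact hp (mem_support_iff.mp he)
  simp only [Pi.smul_apply, smul_eq_mul, mul_pow, Finset.prod_mul_distrib,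
    Finset.prod_pow_eq_pow_sum, hdeg]
  ring

theorem smul_mem_VI {d : ℕ} {I : Ideal (MvPolynomial (Fin d) ℂ)} (hI : IsHomogeneousIdeal I)
    (c : ℂ) {z : Cd d} (hz : z ∈ VI I) : c • z ∈ VI I := by
  intro p hp
  rw [← sum_homogeneousComponent p, map_sum]
  refine Finset.sum_eq_zero fun m _ => ?_
  rw [show (fun i => (c • z) i) = c • fun i => z i from rfl,
    (homogeneousComponent_isHomogeneous m p).eval_smul, hz _ (hI p hp m), mul_zero]

theorem one_mem_ball_inv {r : ℝ} (hr0 : 0 < r) (hr : r < 1) : (1 : ℂ) ∈ ball 0 r⁻¹ := by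
  simpa using (one_lt_inv₀ hr0).2 hr

section Cone

variable {E F : Type*} [NormedAddCommGroup E] [NormedSpace ℂ E] [NormedAddCommGroup F]
  [NormedSpace ℂ F] {S : Set E}

theorem smul_mem_inter_ball (hS : ∀ c : ℂ, ∀ z ∈ S, c • z ∈ S) {z : E} (hz : z ∈ S) {c : ℂ}
    (hc : ‖c‖ * ‖z‖ < 1) : c • z ∈ S ∩ ball 0 1 :=
  ⟨hS c z hz, by rwa [mem_ball_zero_iff, norm_smul]⟩

theorem mapsTo_smul_ball_inv_norm (hS : ∀ c : ℂ, ∀ z ∈ S, c • z ∈ S) {z : E} (hz : z ∈ S)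
    (hz0 : z ≠ 0) : MapsTo (fun c : ℂ => c • z) (ball 0 ‖z‖⁻¹) (S ∩ ball 0 1) := fun c hc =>
  smul_mem_inter_ball hS hz <| by
    rw [← lt_mul_inv_iff₀ (norm_pos_iff.2 hz0), one_mul]
    simpa using hc

theorem inter_closedBall_subset_closure_inter_ball (hS : ∀ c : ℂ, ∀ z ∈ S, c • z ∈ S) :
    S ∩ closedBall 0 1 ⊆ closure (S ∩ ball (0 : E) 1) := by
  rintro z ⟨hzS, hz1⟩
  have h1 : (1 : ℂ) ∈ closure (ball 0 1) := by simp [closure_ball (0 : ℂ) one_ne_zero]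
  simpa using map_mem_closure (continuous_id.smul continuous_const) h1 fun c hc =>
    smul_mem_inter_ball hS hzS <| mul_lt_one_of_nonneg_of_lt_one_left (norm_nonneg c)
      (mem_ball_zero_iff.1 hc) (mem_closedBall_zero_iff.1 hz1)

theorem norm_le_norm_of_mapsTo_inter_ball (hS : ∀ c : ℂ, ∀ z ∈ S, c • z ∈ S) {f : E → F}
    (hf : DifferentiableOn ℂ f (ball 0 1)) (hf0 : f 0 = 0)
    (hmaps : MapsTo f (S ∩ ball 0 1) (closedBall 0 1)) {z : E} (hz : z ∈ S ∩ ball 0 1) :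
    ‖f z‖ ≤ ‖z‖ := by
  rcases eq_or_ne z 0 with rfl | hz0
  · simp [hf0]
  have hline := mapsTo_smul_ball_inv_norm hS hz.1 hz0
  have h1 := one_mem_ball_inv (norm_pos_iff.2 hz0) (mem_ball_zero_iff.1 hz.2)
  have := Complex.dist_le_div_mul_dist_of_mapsTo_ball (f := fun c : ℂ => f (c • z)) (R₂ := 1)
    (hf.comp (differentiableOn_id.smul_const z) (hline.mono_right inter_subset_right))
    (fun c hc => by simpa [hf0] using hmaps (hline hc)) h1
  simpa [hf0] using this

theorem eq_fderiv_of_norm_eq [StrictConvexSpace ℝ F] (hS : ∀ c : ℂ, ∀ z ∈ S, c • z ∈ S)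
    {f : E → F} (hf : DifferentiableOn ℂ f (ball 0 1)) (hf0 : f 0 = 0)
    (hmaps : MapsTo f (S ∩ ball 0 1) (closedBall 0 1)) {z : E} (hz : z ∈ S ∩ ball 0 1)
    (hnorm : ‖f z‖ = ‖z‖) : f z = fderiv ℂ f 0 z := by
  rcases eq_or_ne z 0 with rfl | hz0
  · simp [hf0]
  set g : ℂ → F := fun c => f (c • z) with hg_def
  have hline := mapsTo_smul_ball_inv_norm hS hz.1 hz0
  have h1 := one_mem_ball_inv (norm_pos_iff.2 hz0) (mem_ball_zero_iff.1 hz.2)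
  have hg : DifferentiableOn ℂ g (ball 0 ‖z‖⁻¹) :=
    hf.comp (differentiableOn_id.smul_const z) (hline.mono_right inter_subset_right)
  have hslope : dslope g 0 1 = f z := by simp [dslope_of_ne, slope_def_module, hg_def, hf0]
  have haffine := Complex.affine_of_mapsTo_ball_of_norm_dslope_eq_div hg
    (fun c hc => by simpa [hg_def, hf0] using hmaps (hline hc)) h1 (by simp [hslope, hnorm])
  have hderiv_affine : HasDerivAt g (f z) 0 := by
    refine HasDerivAt.congr_of_eventuallyEq ?_ (haffine.eventuallyEq_of_mem (ball_mem_nhds _ ?_))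
    · simpa [hslope] using ((hasDerivAt_id (0 : ℂ)).smul_const (f z)).const_add (g 0)
    · simpa using hz0
  have hderiv_chain : HasDerivAt g (fderiv ℂ f 0 z) 0 := by
    have hF : HasFDerivAt f (fderiv ℂ f 0) ((0 : ℂ) • z) := by
      simpa using (hf.differentiableAt (ball_mem_nhds _ one_pos)).hasFDerivAt
    simpa [hg_def, Function.comp_def] using
      hF.comp_hasDerivAt (0 : ℂ) ((hasDerivAt_id (0 : ℂ)).smul_const z)
  exact hderiv_affine.unique hderiv_chain

end Cone

theorem stmt3_general {d d' : ℕ} (I : Ideal (MvPolynomial (Fin d) ℂ))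
    (J : Ideal (MvPolynomial (Fin d') ℂ))
    (hI : IsHomogeneousIdeal I) (hJ : IsHomogeneousIdeal J)
    (F : Cd d' → Cd d) (G : Cd d → Cd d')
    (hFc : ContinuousOn F (Metric.closedBall 0 1))
    (hFh : DifferentiableOn ℂ F (Metric.ball 0 1))
    (hF0 : F 0 = 0)
    (hFmap : ∀ z ∈ ZI J, F z ∈ ZI I)
    (hGh : DifferentiableOn ℂ G (Metric.ball 0 1))
    (hGmap : ∀ z ∈ ZI I, G z ∈ ZI J)
    (hGF : ∀ z ∈ ZI J, G (F z) = z) :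
    ∃ A : Cd d' →ₗ[ℂ] Cd d, ∀ z ∈ ZI J, F z = A z := by
  have hVI : ∀ c : ℂ, ∀ z ∈ VI I, c • z ∈ VI I := fun c _ hz => smul_mem_VI hI c hz
  have hVJ : ∀ c : ℂ, ∀ z ∈ VI J, c • z ∈ VI J := fun c _ hz => smul_mem_VI hJ c hz
  have hF_ball : MapsTo F (VI J ∩ ball 0 1) (closedBall 0 1) := fun z hz =>
    (hFmap z ⟨hz.1, ball_subset_closedBall hz.2⟩).2
  have hG_ball : MapsTo G (VI I ∩ ball 0 1) (closedBall 0 1) := fun z hz =>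
    (hGmap z ⟨hz.1, ball_subset_closedBall hz.2⟩).2
  have hlinear : EqOn F (fderiv ℂ F 0) (VI J ∩ ball 0 1) := by
    intro z hz
    have hzZ : z ∈ ZI J := ⟨hz.1, ball_subset_closedBall hz.2⟩
    have hG0 : G 0 = 0 := by
      simpa [hF0] using hGF 0 ⟨by simpa using hVJ 0 z hz.1, mem_closedBall_self zero_le_one⟩
    have hFz : ‖F z‖ ≤ ‖z‖ := norm_le_norm_of_mapsTo_inter_ball hVJ hFh hF0 hF_ball hz
    have hFzI : F z ∈ VI I ∩ ball 0 1 :=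
      ⟨(hFmap z hzZ).1, mem_ball_zero_iff.2 (hFz.trans_lt (mem_ball_zero_iff.1 hz.2))⟩
    have hGFz : ‖z‖ ≤ ‖F z‖ := by
      simpa [hGF z hzZ] using norm_le_norm_of_mapsTo_inter_ball hVI hGh hG0 hG_ball hFzI
    exact eq_fderiv_of_norm_eq hVJ hFh hF0 hF_ball hz (le_antisymm hFz hGFz)
  exact ⟨fderiv ℂ F 0, hlinear.of_subset_closure (hFc.mono inter_subset_right)
    (fderiv ℂ F 0).continuous.continuousOn (inter_subset_inter_right _ ball_subset_closedBall)
    (inter_closedBall_subset_closure_inter_ball hVJ)⟩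

/-- analogue of Cartan's uniqueness theorem. If `F` is continuous
on the closed unit ball, holomorphic on the open unit ball, maps `0` to `0` and
`Z(J)` into `Z(I)`, and has a similarly defined "inverse" `G` (with
`F ∘ G = id` on `Z(I)` and `G ∘ F = id` on `Z(J)`), then `F` agrees with a
ℂ-linear map on `Z(J)`. -/
theorem stmt3 {d d' : ℕ} (I : Ideal (MvPolynomial (Fin d) ℂ))
    (J : Ideal (MvPolynomial (Fin d') ℂ))
    (hI : IsHomogeneousIdeal I) (hJ : IsHomogeneousIdeal J)
    (F : Cd d' → Cd d) (G : Cd d → Cd d')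
    (hFc : ContinuousOn F (Metric.closedBall 0 1))
    (hFh : DifferentiableOn ℂ F (Metric.ball 0 1))
    (hF0 : F 0 = 0)
    (hFmap : ∀ z ∈ ZI J, F z ∈ ZI I)
    (hGc : ContinuousOn G (Metric.closedBall 0 1))
    (hGh : DifferentiableOn ℂ G (Metric.ball 0 1))
    (hGmap : ∀ z ∈ ZI I, G z ∈ ZI J)
    (hFG : ∀ z ∈ ZI I, F (G z) = z)
    (hGF : ∀ z ∈ ZI J, G (F z) = z) :
    ∃ A : Cd d' →ₗ[ℂ] Cd d, ∀ z ∈ ZI J, F z = A z :=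
  stmt3_general I J hI hJ F G hFc hFh hF0 hFmap hGh hGmap hGF
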